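/- In the infinite iterated crossed product algebra H_{(−∞,∞)} = ⋯ ⋊ H ⋊ H* ⋊ H ⋊ ⋯, for any integer p the subalgebras H_{(−∞,p]} and H_{[p+2,∞)} are mutual commutants: the centralizer of H_{(−∞,p]} in H_{(−∞,∞)} equals H_{[p+2,∞)} and vice versa. -/

import Mathlib

/- STATEMENT 12: In the (algebraic) two-sided infinite iterated crossed product
H_{(−∞,∞)} = ⋯ ⋊ H ⋊ H* ⋊ H ⋊ ⋯ (with H at odd positions and H* at even positions), for any
integer p the subalgebras H_{(−∞,p]} and H_{[p+2,∞)} are mutual commutants: the centralizer of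
H_{(−∞,p]} equals H_{[p+2,∞)} and vice versa.  The infinite iterated crossed product is presented
abstractly: an algebra B with alternating factor embeddings indexed by ℤ satisfying the
crossed-product relations, generating B, each finite interval spanning a subalgebra of the
correct dimension. -/

open scoped TensorProduct

noncomputable section

variable {H : Type*} [Ring H] [HopfAlgebra ℂ H]

/-- Convolution product on the dual of `H`, as a linear map on the tensor square. -/
def dmulT : Module.Dual ℂ H ⊗[ℂ] Module.Dual ℂ H →ₗ[ℂ] Module.Dual ℂ H :=
  (Coalgebra.comul (R := ℂ) (A := H)).dualMap ∘ₗ TensorProduct.dualDistrib ℂ H H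

/-- Comultiplication on the dual of `H` (dual to the multiplication of `H`). -/
def dComul [FiniteDimensional ℂ H] :
    Module.Dual ℂ H →ₗ[ℂ] Module.Dual ℂ H ⊗[ℂ] Module.Dual ℂ H :=
  (TensorProduct.dualDistribEquiv ℂ H H).symm.toLinearMap ∘ₗ (LinearMap.mul' ℂ H).dualMap

/-- The natural action of the dual on `H` : `f · x = f(x₂) x₁`, as a linear map on the
tensor product. -/
def aKH : Module.Dual ℂ H ⊗[ℂ] H →ₗ[ℂ] H :=
  (TensorProduct.lid ℂ H).toLinearMap
    ∘ₗ TensorProduct.map (contractLeft ℂ H) LinearMap.id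
    ∘ₗ (TensorProduct.assoc ℂ (Module.Dual ℂ H) H H).symm.toLinearMap
    ∘ₗ TensorProduct.map LinearMap.id
        ((TensorProduct.comm ℂ H H).toLinearMap ∘ₗ Coalgebra.comul (R := ℂ))

/-- The natural action of `H` on its dual : `x · f = f₁ f₂(x)`, as a linear map on the
tensor product. -/
def aHK [FiniteDimensional ℂ H] : H ⊗[ℂ] Module.Dual ℂ H →ₗ[ℂ] Module.Dual ℂ H :=
  (TensorProduct.rid ℂ (Module.Dual ℂ H)).toLinearMap
    ∘ₗ TensorProduct.map LinearMap.id (contractLeft ℂ H)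
    ∘ₗ (TensorProduct.assoc ℂ (Module.Dual ℂ H) (Module.Dual ℂ H) H).toLinearMap
    ∘ₗ TensorProduct.map dComul LinearMap.id
    ∘ₗ (TensorProduct.comm ℂ H (Module.Dual ℂ H)).toLinearMap

/-- Straightening map `x ⊗ f ↦ (x₁ · f) ⊗ x₂`. -/
def σHK [FiniteDimensional ℂ H] :
    H ⊗[ℂ] Module.Dual ℂ H →ₗ[ℂ] Module.Dual ℂ H ⊗[ℂ] H :=
  TensorProduct.map aHK LinearMap.id
    ∘ₗ (TensorProduct.assoc ℂ H (Module.Dual ℂ H) H).symm.toLinearMap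
    ∘ₗ TensorProduct.map LinearMap.id (TensorProduct.comm ℂ H (Module.Dual ℂ H)).toLinearMap
    ∘ₗ (TensorProduct.assoc ℂ H H (Module.Dual ℂ H)).toLinearMap
    ∘ₗ TensorProduct.map (Coalgebra.comul (R := ℂ)) LinearMap.id

/-- Straightening map `f ⊗ x ↦ (f₁ · x) ⊗ f₂`. -/
def σKH [FiniteDimensional ℂ H] :
    Module.Dual ℂ H ⊗[ℂ] H →ₗ[ℂ] H ⊗[ℂ] Module.Dual ℂ H :=
  TensorProduct.map aKH LinearMap.id
    ∘ₗ (TensorProduct.assoc ℂ (Module.Dual ℂ H) H (Module.Dual ℂ H)).symm.toLinearMap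
    ∘ₗ TensorProduct.map LinearMap.id (TensorProduct.comm ℂ (Module.Dual ℂ H) H).toLinearMap
    ∘ₗ (TensorProduct.assoc ℂ (Module.Dual ℂ H) (Module.Dual ℂ H) H).toLinearMap
    ∘ₗ TensorProduct.map dComul LinearMap.id

variable {B : Type*} [Ring B] [Algebra ℂ B]

/-- The subset of `B` corresponding to the `i`-th factor: a copy of `H` when `i + par` is odd
and a copy of `H*` when `i + par` is even. -/
def copyR (par : ℤ) (eH : ℤ → H →ₗ[ℂ] B) (eK : ℤ → Module.Dual ℂ H →ₗ[ℂ] B) (i : ℤ) : Set B :=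
  if (i + par) % 2 = 0 then Set.range (eK i) else Set.range (eH i)

/-- `B` is the iterated crossed product `H^lo ⋊ ⋯ ⋊ H^hi` (where `H^i = H` when `i + par` is odd
and `H^i = H*` when `i + par` is even), presented by its generators and relations: each factor
embeds as a unital subalgebra, distant factors commute, and consecutive factors satisfy the
crossed-product straightening relations coming from the natural actions `f·x = f(x₂)x₁` of `H*`
on `H` and `x·f = f₁ f₂(x)` of `H` on `H*`; moreover the factors generate `B`. -/
structure IsAltTower [FiniteDimensional ℂ H] (par : ℤ) (eH : ℤ → H →ₗ[ℂ] B)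
    (eK : ℤ → Module.Dual ℂ H →ₗ[ℂ] B) (lo hi : ℤ) : Prop where
  mulH : ∀ i, lo ≤ i → i ≤ hi → (i + par) % 2 = 1 → ∀ x y, eH i (x * y) = eH i x * eH i y
  oneH : ∀ i, lo ≤ i → i ≤ hi → (i + par) % 2 = 1 → eH i 1 = 1
  mulK : ∀ i, lo ≤ i → i ≤ hi → (i + par) % 2 = 0 →
    ∀ f g, eK i (dmulT (f ⊗ₜ g)) = eK i f * eK i g
  oneK : ∀ i, lo ≤ i → i ≤ hi → (i + par) % 2 = 0 →
    eK i (Coalgebra.counit (R := ℂ) (A := H)) = 1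
  commute : ∀ i j, lo ≤ i → j ≤ hi → i + 2 ≤ j →
    ∀ a ∈ copyR par eH eK i, ∀ b ∈ copyR par eH eK j, a * b = b * a
  strK : ∀ i, lo ≤ i → i + 1 ≤ hi → (i + par) % 2 = 0 →
    LinearMap.mul' ℂ B ∘ₗ TensorProduct.map (eH (i+1)) (eK i)
      = LinearMap.mul' ℂ B ∘ₗ TensorProduct.map (eK i) (eH (i+1)) ∘ₗ σHK
  strH : ∀ i, lo ≤ i → i + 1 ≤ hi → (i + par) % 2 = 1 →
    LinearMap.mul' ℂ B ∘ₗ TensorProduct.map (eK (i+1)) (eH i)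
      = LinearMap.mul' ℂ B ∘ₗ TensorProduct.map (eH i) (eK (i+1)) ∘ₗ σKH
  gen : Algebra.adjoin ℂ (⋃ i ∈ Set.Icc lo hi, copyR par eH eK i) = ⊤

/-- `B` is the two-sided infinite iterated crossed product `⋯ ⋊ H^{-1} ⋊ H^0 ⋊ H^1 ⋊ ⋯`,
presented by generators and relations (all conditions of `IsAltTower`, for every index). -/
structure IsAltTowerZ [FiniteDimensional ℂ H] (par : ℤ) (eH : ℤ → H →ₗ[ℂ] B)
    (eK : ℤ → Module.Dual ℂ H →ₗ[ℂ] B) : Prop where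
  mulH : ∀ i, (i + par) % 2 = 1 → ∀ x y, eH i (x * y) = eH i x * eH i y
  oneH : ∀ i, (i + par) % 2 = 1 → eH i 1 = 1
  mulK : ∀ i, (i + par) % 2 = 0 → ∀ f g, eK i (dmulT (f ⊗ₜ g)) = eK i f * eK i g
  oneK : ∀ i, (i + par) % 2 = 0 → eK i (Coalgebra.counit (R := ℂ) (A := H)) = 1
  commute : ∀ i j, i + 2 ≤ j →
    ∀ a ∈ copyR par eH eK i, ∀ b ∈ copyR par eH eK j, a * b = b * a
  strK : ∀ i, (i + par) % 2 = 0 →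
    LinearMap.mul' ℂ B ∘ₗ TensorProduct.map (eH (i+1)) (eK i)
      = LinearMap.mul' ℂ B ∘ₗ TensorProduct.map (eK i) (eH (i+1)) ∘ₗ σHK
  strH : ∀ i, (i + par) % 2 = 1 →
    LinearMap.mul' ℂ B ∘ₗ TensorProduct.map (eK (i+1)) (eH i)
      = LinearMap.mul' ℂ B ∘ₗ TensorProduct.map (eH i) (eK (i+1)) ∘ₗ σKH
  gen : Algebra.adjoin ℂ (⋃ i : ℤ, copyR par eH eK i) = ⊤

/-
Write `A i` for the `i`-th factor. Distant factors commute and the straightening relations give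
`A (i+1) A i ⊆ A i A (i+1)`, so every block `H_{[lo,hi]}` is the ordered product `A lo ⋯ A hi`;
by the dimension count, adjacent blocks are linearly disjoint. If `b` commutes with
`H_{(-∞,p]}`, pick a block `H_{[lo,hi]} = H_{[lo,p+1]} H_{[p+2,hi]}` containing `b` and write
`b = ∑ u_j v_j` with `(v_j)` a basis of `H_{[p+2,hi]}`. Linear disjointness forces every `u_j`
to commute with `H_{(-∞,p]}` too, and peeling off the lowest factor one at a time shows that
`u_j` is a scalar. Each peeling step uses that a factor has trivial relative commutant in its
neighbour: e.g. if `x ∈ H` commutes with `H*`, the relation `x f = (x₁ · f) x₂` gives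
`f x = f 1 * ε x` for every `f`, hence `x = ε x • 1`. The other half is symmetric.
-/

section LinearAlgebra

open TensorProduct Module
open Subalgebra (toSubmodule)

variable {K S X Y : Type*} [Field K] [Ring S] [Algebra K S]
  [AddCommGroup X] [Module K X] [AddCommGroup Y] [Module K Y]

theorem LinearMap.injective_of_finrank_range_eq [FiniteDimensional K X] {f : X →ₗ[K] Y}
    (h : finrank K (LinearMap.range f) = finrank K X) : Function.Injective f := by
  have := LinearMap.finrank_range_add_finrank_ker f
  rw [← LinearMap.ker_eq_bot, ← Submodule.finrank_eq_zero]
  omega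

theorem LinearMap.range_mul'_comp_map (f : X →ₗ[K] S) (g : Y →ₗ[K] S) :
    range (mul' K S ∘ₗ map f g) = range f * range g := by
  have : mul' K S ∘ₗ map f g =
      Submodule.mulMap _ _ ∘ₗ map f.rangeRestrict g.rangeRestrict :=
    TensorProduct.ext' fun _ _ => rfl
  rw [this, range_comp_of_range_eq_top _ (range_eq_top.2
    (map_surjective f.surjective_rangeRestrict g.surjective_rangeRestrict)), Submodule.mulMap_range]

theorem LinearMap.injective_mul'_comp_map [FiniteDimensional K X] [FiniteDimensional K Y]
    {f : X →ₗ[K] S} {g : Y →ₗ[K] S}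
    (h : finrank K ↥(range f * range g) = finrank K X * finrank K Y) :
    Function.Injective (mul' K S ∘ₗ map f g) :=
  injective_of_finrank_range_eq (by rw [range_mul'_comp_map, h, finrank_tensorProduct])

theorem LinearMap.commute_iff_of_mul'_comp_map_eq {e : X →ₗ[K] S} {e' : Y →ₗ[K] S}
    {σ : X ⊗[K] Y →ₗ[K] Y ⊗[K] X}
    (hσ : mul' K S ∘ₗ map e e' = mul' K S ∘ₗ map e' e ∘ₗ σ)
    (hinj : Function.Injective (mul' K S ∘ₗ map e' e)) (x : X) (y : Y) :
    Commute (e' y) (e x) ↔ σ (x ⊗ₜ y) = y ⊗ₜ x := by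
  have h := LinearMap.congr_fun hσ (x ⊗ₜ y)
  simp only [comp_apply, map_tmul, mul'_apply] at h
  rw [Commute, SemiconjBy, h, eq_comm, ← hinj.eq_iff]
  simp

namespace Submodule

variable {M N : Submodule K S}

theorem LinearDisjoint.of_finrank_mul [FiniteDimensional K M] [FiniteDimensional K N]
    (h : finrank K ↥(M * N) = finrank K M * finrank K N) : M.LinearDisjoint N := by
  constructor
  refine LinearMap.injective_of_finrank_range_eq (X := M ⊗[K] N) ?_
  rw [mulMap_range, h, finrank_tensorProduct]

theorem exists_sum_mul_eq_of_mem_mul_right {ι : Type*} [Fintype ι] (n : Basis ι K N) {b : S}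
    (hb : b ∈ M * N) : ∃ m : ι → M, ∑ i, (m i : S) * n i = b := by
  induction hb using Submodule.mul_induction_on' with
  | mem_mul_mem x hx y hy =>
    refine ⟨fun i => n.repr ⟨y, hy⟩ i • ⟨x, hx⟩, ?_⟩
    conv_rhs => rw [← show ∑ i, n.repr ⟨y, hy⟩ i • (n i : S) = y by
      simpa only [coe_sum, coe_smul] using congrArg Subtype.val (n.sum_repr ⟨y, hy⟩)]
    simp [Finset.mul_sum]
  | add x _ y _ hx hy =>
    obtain ⟨f, rfl⟩ := hx
    obtain ⟨g, rfl⟩ := hy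
    exact ⟨f + g, by simp [add_mul, Finset.sum_add_distrib]⟩

theorem exists_sum_mul_eq_of_mem_mul_left {ι : Type*} [Fintype ι] (m : Basis ι K M) {b : S}
    (hb : b ∈ M * N) : ∃ n : ι → N, ∑ i, (m i : S) * n i = b := by
  induction hb using Submodule.mul_induction_on' with
  | mem_mul_mem x hx y hy =>
    refine ⟨fun i => m.repr ⟨x, hx⟩ i • ⟨y, hy⟩, ?_⟩
    conv_rhs => rw [← show ∑ i, m.repr ⟨x, hx⟩ i • (m i : S) = x by
      simpa only [coe_sum, coe_smul] using congrArg Subtype.val (m.sum_repr ⟨x, hx⟩)]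
    simp [Finset.sum_mul]
  | add x _ y _ hx hy =>
    obtain ⟨f, rfl⟩ := hx
    obtain ⟨g, rfl⟩ := hy
    exact ⟨f + g, by simp [mul_add, Finset.sum_add_distrib]⟩

theorem LinearDisjoint.eq_zero_of_sum_mul_eq_zero_right (H : M.LinearDisjoint N) {ι : Type*}
    [Fintype ι] (n : Basis ι K N) (m : ι → M) (h : ∑ i, (m i : S) * n i = 0) : m = 0 := by
  classical
  have hker := H.linearIndependent_right_of_flat n.linearIndependent
  have : Finsupp.equivFunOnFinite.symm m ∈ LinearMap.ker (mulRightMap M n) := by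
    simpa [mulRightMap_apply, Finsupp.sum_fintype] using h
  rw [hker, mem_bot] at this
  funext i
  simpa using DFunLike.congr_fun this i

theorem LinearDisjoint.eq_zero_of_sum_mul_eq_zero_left (H : M.LinearDisjoint N) {ι : Type*}
    [Fintype ι] (m : Basis ι K M) (n : ι → N) (h : ∑ i, (m i : S) * n i = 0) : n = 0 := by
  classical
  have hker := H.linearIndependent_left_of_flat m.linearIndependent
  have : Finsupp.equivFunOnFinite.symm n ∈ LinearMap.ker (mulLeftMap N m) := by
    simpa [mulLeftMap_apply, Finsupp.sum_fintype] using h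
  rw [hker, mem_bot] at this
  funext i
  simpa using DFunLike.congr_fun this i

end Submodule

theorem Subalgebra.toSubmodule_sup_eq_mul {P Q : Subalgebra K S}
    (h : toSubmodule Q * toSubmodule P ≤ toSubmodule P * toSubmodule Q) :
    toSubmodule (P ⊔ Q) = toSubmodule P * toSubmodule Q := by
  refine le_antisymm ?_ (mul_toSubmodule_le P Q)
  have hmul : toSubmodule P * toSubmodule Q * (toSubmodule P * toSubmodule Q) ≤
      toSubmodule P * toSubmodule Q :=
    calc _ = toSubmodule P * (toSubmodule Q * toSubmodule P) * toSubmodule Q := by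
          simp only [mul_assoc]
      _ ≤ toSubmodule P * (toSubmodule P * toSubmodule Q) * toSubmodule Q := by gcongr
      _ = toSubmodule P * toSubmodule Q := by
          rw [← mul_assoc, (isIdempotentElem_toSubmodule P).eq, mul_assoc,
            (isIdempotentElem_toSubmodule Q).eq]
  have hP : toSubmodule P ≤ toSubmodule P * toSubmodule Q := fun x hx => by
    simpa using Submodule.mul_mem_mul hx (show (1 : S) ∈ toSubmodule Q from Q.one_mem)
  have hQ : toSubmodule Q ≤ toSubmodule P * toSubmodule Q := fun x hx => by
    simpa using Submodule.mul_mem_mul (show (1 : S) ∈ toSubmodule P from P.one_mem) hx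
  let PQ : Subalgebra K S := (toSubmodule P * toSubmodule Q).toSubalgebra
    (hP P.one_mem) (fun _ _ hx hy => hmul (Submodule.mul_mem_mul hx hy))
  have hPQ : P ⊔ Q ≤ PQ := sup_le hP hQ
  exact hPQ

theorem Subalgebra.mem_right_of_mem_mul_of_forall_commute {U₀ V : Subalgebra K S}
    [FiniteDimensional K V] {T : Set S}
    (hT : ∀ a ∈ T, ∃ U : Subalgebra K S, U₀ ≤ U ∧ a ∈ U ∧ U.LinearDisjoint V ∧
      ∀ v ∈ V, Commute a v)
    (hU₀ : ∀ x ∈ U₀, (∀ a ∈ T, Commute a x) → x ∈ (⊥ : Subalgebra K S))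
    {b : S} (hb : b ∈ toSubmodule U₀ * toSubmodule V) (hbT : ∀ a ∈ T, Commute a b) :
    b ∈ V := by
  let v := finBasis K V
  obtain ⟨u, rfl⟩ := Submodule.exists_sum_mul_eq_of_mem_mul_right v hb
  have hu : ∀ i, ∀ a ∈ T, Commute a (u i) := by
    intro i a ha
    obtain ⟨U, hU₀U, haU, hUV, haV⟩ := hT a ha
    have hcomm := hUV.eq_zero_of_sum_mul_eq_zero_right v
      (fun j => ⟨a * u j - u j * a, show _ ∈ U from sub_mem (mul_mem haU (hU₀U (u j).2))
        (mul_mem (hU₀U (u j).2) haU)⟩) ?_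
    · exact sub_eq_zero.mp (congrArg Subtype.val (congrFun hcomm i))
    -- `∑ (a u_j - u_j a) v_j = a b - b a = 0`, as `a` commutes with every `v_j`
    · have := (hbT a ha).eq
      simp only [Finset.mul_sum, Finset.sum_mul, mul_assoc] at this
      simp only [sub_mul, Finset.sum_sub_distrib, mul_assoc, ← (haV _ (v _).2).eq, this, sub_self]
  refine sum_mem fun i _ => ?_
  obtain ⟨c, hc⟩ := Algebra.mem_bot.mp (hU₀ _ (u i).2 (hu i))
  rw [← hc, ← Algebra.smul_def]
  exact V.smul_mem (v i).2 c

theorem Subalgebra.mem_left_of_mem_mul_of_forall_commute {U₀ V : Subalgebra K S}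
    [FiniteDimensional K V] {T : Set S}
    (hT : ∀ a ∈ T, ∃ U : Subalgebra K S, U₀ ≤ U ∧ a ∈ U ∧ V.LinearDisjoint U ∧
      ∀ v ∈ V, Commute a v)
    (hU₀ : ∀ x ∈ U₀, (∀ a ∈ T, Commute a x) → x ∈ (⊥ : Subalgebra K S))
    {b : S} (hb : b ∈ toSubmodule V * toSubmodule U₀) (hbT : ∀ a ∈ T, Commute a b) :
    b ∈ V := by
  let v := finBasis K V
  obtain ⟨u, rfl⟩ := Submodule.exists_sum_mul_eq_of_mem_mul_left v hb
  have hu : ∀ i, ∀ a ∈ T, Commute a (u i) := by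
    intro i a ha
    obtain ⟨U, hU₀U, haU, hVU, haV⟩ := hT a ha
    have hcomm := hVU.eq_zero_of_sum_mul_eq_zero_left v
      (fun j => ⟨a * u j - u j * a, show _ ∈ U from sub_mem (mul_mem haU (hU₀U (u j).2))
        (mul_mem (hU₀U (u j).2) haU)⟩) ?_
    · exact sub_eq_zero.mp (congrArg Subtype.val (congrFun hcomm i))
    · have := (hbT a ha).eq
      simp only [Finset.mul_sum, Finset.sum_mul, ← mul_assoc] at this
      simp only [mul_sub, Finset.sum_sub_distrib, ← mul_assoc, ← (haV _ (v _).2).eq, this,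
        sub_self]
  refine sum_mem fun i _ => ?_
  obtain ⟨c, hc⟩ := Algebra.mem_bot.mp (hU₀ _ (u i).2 (hu i))
  rw [← hc, ← Algebra.commutes, ← Algebra.smul_def]
  exact V.smul_mem (v i).2 c

end LinearAlgebra

namespace CrossedProductTower

open Set TensorProduct Module
open Subalgebra (toSubmodule)

section Tower

variable {K S : Type*} [Field K] [Ring S] [Algebra K S]

/-- `H_s` in the paper's notation; e.g. `H_{[i,j]}` is `towerBlock A (Icc i j)`. -/
def towerBlock (A : ℤ → Subalgebra K S) (s : Set ℤ) : Subalgebra K S :=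
  Algebra.adjoin K (⋃ i ∈ s, (A i : Set S))

structure IsCrossedTower (A : ℤ → Subalgebra K S) : Prop where
  commute : ∀ i j, i + 2 ≤ j → ∀ a ∈ A i, ∀ b ∈ A j, Commute a b
  succ_mul_le : ∀ i,
    toSubmodule (A (i + 1)) * toSubmodule (A i) ≤ toSubmodule (A i) * toSubmodule (A (i + 1))

variable {A : ℤ → Subalgebra K S}

theorem towerBlock_mono {s t : Set ℤ} (h : s ⊆ t) : towerBlock A s ≤ towerBlock A t :=
  Algebra.adjoin_mono (Set.biUnion_subset_biUnion_left h)

theorem le_towerBlock {s : Set ℤ} {i : ℤ} (hi : i ∈ s) : A i ≤ towerBlock A s := fun _ hx =>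
  Algebra.subset_adjoin (Set.mem_biUnion hi hx)

theorem towerBlock_Icc_self (i : ℤ) : towerBlock A (Icc i i) = A i := by
  simp [towerBlock, Algebra.adjoin_eq]

theorem towerBlock_Icc_of_lt {lo hi : ℤ} (h : hi < lo) : towerBlock A (Icc lo hi) = ⊥ := by
  simp [towerBlock, Icc_eq_empty_of_lt h]

theorem towerBlock_Icc_eq_sup {lo m hi : ℤ} (h₁ : lo ≤ m) (h₂ : m ≤ hi + 1) :
    towerBlock A (Icc lo hi) = towerBlock A (Icc lo (m - 1)) ⊔ towerBlock A (Icc m hi) := by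
  have : Icc lo hi = Icc lo (m - 1) ∪ Icc m hi := by
    ext; simp only [Set.mem_union, mem_Icc]; omega
  rw [towerBlock, this, Set.biUnion_union, Algebra.adjoin_union]
  rfl

theorem exists_mem_towerBlock_Icc (hgen : towerBlock A univ = ⊤) (x : S) (lo hi : ℤ) :
    ∃ lo' ≤ lo, ∃ hi' ≥ hi, x ∈ towerBlock A (Icc lo' hi') := by
  let F : ℕ → Subalgebra K S := fun n => towerBlock A (Icc (lo - n) (hi + n))
  have hF : Monotone F := fun m n h => towerBlock_mono (Icc_subset_Icc (by omega) (by omega))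
  have hle : towerBlock A univ ≤ ⨆ n, F n := Algebra.adjoin_le fun y hy => by
    obtain ⟨i, -, hy⟩ := Set.mem_iUnion₂.mp hy
    exact le_iSup F ((lo - i).toNat + (i - hi).toNat)
      (le_towerBlock (show i ∈ Icc _ _ by simp only [mem_Icc]; omega) hy)
  have hx := hle (hgen ▸ Algebra.mem_top : x ∈ towerBlock A univ)
  rw [← SetLike.mem_coe, Subalgebra.coe_iSup_of_directed hF.directed_le, Set.mem_iUnion] at hx
  obtain ⟨n, hn⟩ := hx
  exact ⟨lo - n, by omega, hi + n, by omega, hn⟩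

namespace IsCrossedTower

theorem commute_of_far (hA : IsCrossedTower A) {i j : ℤ} (h : i + 2 ≤ j ∨ j + 2 ≤ i)
    {a b : S} (ha : a ∈ A i) (hb : b ∈ A j) : Commute a b :=
  h.elim (fun h => hA.commute i j h a ha b hb) (fun h => (hA.commute j i h b hb a ha).symm)

theorem commute_of_mem_towerBlock (hA : IsCrossedTower A) {i : ℤ} {s : Set ℤ}
    (hs : ∀ j ∈ s, i + 2 ≤ j ∨ j + 2 ≤ i) {a x : S} (ha : a ∈ A i)
    (hx : x ∈ towerBlock A s) : Commute a x :=
  Algebra.commute_of_mem_adjoin_of_forall_mem_commute hx fun b hb => by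
    obtain ⟨j, hj, hb⟩ := Set.mem_iUnion₂.mp hb
    exact hA.commute_of_far (hs j hj) ha hb

theorem towerBlock_le_centralizer (hA : IsCrossedTower A) {s t : Set ℤ}
    (h : ∀ i ∈ s, ∀ j ∈ t, i + 2 ≤ j ∨ j + 2 ≤ i) :
    towerBlock A t ≤ Subalgebra.centralizer K (towerBlock A s : Set S) :=
  Algebra.adjoin_le fun b hb => by
    obtain ⟨j, hj, hb⟩ := Set.mem_iUnion₂.mp hb
    exact (Subalgebra.mem_centralizer_iff K).mpr fun x hx =>
      (hA.commute_of_mem_towerBlock (fun i hi => (h i hi j hj).symm) hb hx).eq.symm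

theorem toSubmodule_towerBlock_Icc_eq_factor_mul (hA : IsCrossedTower A) {lo hi : ℤ}
    (h : lo ≤ hi) : toSubmodule (towerBlock A (Icc lo hi)) =
      toSubmodule (A lo) * toSubmodule (towerBlock A (Icc (lo + 1) hi)) := by
  induction lo, h using Int.leInductionDown with
  | base =>
    rw [towerBlock_Icc_self, towerBlock_Icc_of_lt (lt_add_one hi), Algebra.toSubmodule_bot,
      mul_one]
  | pred lo hlo ih =>
    rw [towerBlock_Icc_eq_sup (m := lo) (by omega) (by omega), towerBlock_Icc_self,
      sub_add_cancel]
    refine Subalgebra.toSubmodule_sup_eq_mul ?_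
    have hcomm : toSubmodule (towerBlock A (Icc (lo + 1) hi)) * toSubmodule (A (lo - 1)) =
        toSubmodule (A (lo - 1)) * toSubmodule (towerBlock A (Icc (lo + 1) hi)) :=
      Submodule.mul_comm_of_commute fun x hx a ha => (hA.commute_of_mem_towerBlock
        (fun j hj => Or.inl (by simp only [mem_Icc] at hj; omega)) ha hx).symm
    rw [ih, mul_assoc, hcomm, ← mul_assoc, ← mul_assoc]
    exact mul_le_mul' (by simpa using hA.succ_mul_le (lo - 1)) le_rfl

theorem toSubmodule_towerBlock_Icc_eq_mul (hA : IsCrossedTower A) {lo m hi : ℤ} (h₁ : lo ≤ m)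
    (h₂ : m ≤ hi + 1) : toSubmodule (towerBlock A (Icc lo hi)) =
      toSubmodule (towerBlock A (Icc lo (m - 1))) *
        toSubmodule (towerBlock A (Icc m hi)) := by
  induction lo, h₁ using Int.leInductionDown with
  | base => rw [towerBlock_Icc_of_lt (sub_one_lt m), Algebra.toSubmodule_bot, one_mul]
  | pred lo hlo ih =>
    rw [hA.toSubmodule_towerBlock_Icc_eq_factor_mul (lo := lo - 1) (hi := hi) (by omega),
      hA.toSubmodule_towerBlock_Icc_eq_factor_mul (lo := lo - 1) (hi := m - 1) (by omega),
      sub_add_cancel, ih, mul_assoc]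

theorem finiteDimensional_towerBlock_Icc (hA : IsCrossedTower A)
    (hfin : ∀ i, FiniteDimensional K (A i)) (lo hi : ℤ) :
    FiniteDimensional K (towerBlock A (Icc lo hi)) := by
  rcases lt_or_ge hi lo with h | h
  · rw [towerBlock_Icc_of_lt h]
    infer_instance
  induction lo, h using Int.leInductionDown with
  | base => rw [towerBlock_Icc_self]; exact hfin hi
  | pred lo hlo ih =>
    change FiniteDimensional K (toSubmodule (towerBlock A (Icc (lo - 1) hi)))
    rw [hA.toSubmodule_towerBlock_Icc_eq_factor_mul (by omega), sub_add_cancel]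
    exact Module.Finite.iff_fg.mpr ((Module.Finite.iff_fg.mp (hfin (lo - 1))).mul
      (Module.Finite.iff_fg.mp ih))

theorem linearDisjoint_towerBlock_of_finrank (hA : IsCrossedTower A)
    (hfin : ∀ i, FiniteDimensional K (A i)) {d : ℕ}
    (hdim : ∀ lo hi, lo ≤ hi → finrank K (towerBlock A (Icc lo hi)) = d ^ (hi + 1 - lo).toNat)
    (lo m hi : ℤ) :
    (towerBlock A (Icc lo (m - 1))).LinearDisjoint (towerBlock A (Icc m hi)) := by
  rcases lt_or_ge (m - 1) lo with h | h
  · rw [towerBlock_Icc_of_lt h]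
    exact Subalgebra.LinearDisjoint.bot_left _
  rcases lt_or_ge hi m with h' | h'
  · rw [towerBlock_Icc_of_lt h']
    exact Subalgebra.LinearDisjoint.bot_right _
  have := hA.finiteDimensional_towerBlock_Icc hfin lo (m - 1)
  have := hA.finiteDimensional_towerBlock_Icc hfin m hi
  refine Submodule.LinearDisjoint.of_finrank_mul ?_
  rw [← hA.toSubmodule_towerBlock_Icc_eq_mul (by omega) (by omega)]
  simp only [Subalgebra.finrank_toSubmodule]
  rw [hdim _ _ (by omega), hdim _ _ h, hdim _ _ h', ← pow_add]
  congr 1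
  omega

theorem mem_towerBlock_Icc_add_one_of_commute (hA : IsCrossedTower A)
    (hfin : ∀ i, FiniteDimensional K (A i))
    (hdisj : ∀ lo m hi, (towerBlock A (Icc lo (m - 1))).LinearDisjoint (towerBlock A (Icc m hi)))
    (hsucc : ∀ i, Subalgebra.centralizer K (A i : Set S) ⊓ A (i + 1) = ⊥)
    {lo hi : ℤ} {u : S} (hu : u ∈ towerBlock A (Icc lo hi))
    (hc : ∀ a ∈ A (lo - 1), Commute a u) : u ∈ towerBlock A (Icc (lo + 1) hi) := by
  rcases lt_or_ge hi lo with h | h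
  · rw [towerBlock_Icc_of_lt h] at hu
    exact (bot_le : ⊥ ≤ towerBlock A _) hu
  have := hA.finiteDimensional_towerBlock_Icc hfin (lo + 1) hi
  refine Subalgebra.mem_right_of_mem_mul_of_forall_commute (U₀ := A lo) (T := A (lo - 1))
    (fun a ha => ⟨towerBlock A (Icc (lo - 1) lo), le_towerBlock (by simp),
      le_towerBlock (by simp) ha, by simpa using hdisj (lo - 1) (lo + 1) hi,
      fun v hv => hA.commute_of_mem_towerBlock
        (fun j hj => Or.inl (by simp only [mem_Icc] at hj; omega)) ha hv⟩)
    (fun x hx hxc => (hsucc (lo - 1)).le ⟨hxc, by simpa using hx⟩) ?_ hc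
  rw [← hA.toSubmodule_towerBlock_Icc_eq_factor_mul h]
  exact hu

theorem mem_towerBlock_Icc_sub_one_of_commute (hA : IsCrossedTower A)
    (hfin : ∀ i, FiniteDimensional K (A i))
    (hdisj : ∀ lo m hi, (towerBlock A (Icc lo (m - 1))).LinearDisjoint (towerBlock A (Icc m hi)))
    (hpred : ∀ i, Subalgebra.centralizer K (A (i + 1) : Set S) ⊓ A i = ⊥)
    {lo hi : ℤ} {u : S} (hu : u ∈ towerBlock A (Icc lo hi))
    (hc : ∀ a ∈ A (hi + 1), Commute a u) : u ∈ towerBlock A (Icc lo (hi - 1)) := by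
  rcases lt_or_ge hi lo with h | h
  · rw [towerBlock_Icc_of_lt h] at hu
    exact (bot_le : ⊥ ≤ towerBlock A _) hu
  have := hA.finiteDimensional_towerBlock_Icc hfin lo (hi - 1)
  refine Subalgebra.mem_left_of_mem_mul_of_forall_commute (U₀ := A hi) (T := A (hi + 1))
    (fun a ha => ⟨towerBlock A (Icc hi (hi + 1)), le_towerBlock (by simp),
      le_towerBlock (by simp) ha, hdisj lo hi (hi + 1),
      fun v hv => hA.commute_of_mem_towerBlock
        (fun j hj => Or.inr (by simp only [mem_Icc] at hj; omega)) ha hv⟩)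
    (fun x hx hxc => (hpred hi).le ⟨hxc, hx⟩) ?_ hc
  rw [← towerBlock_Icc_self (A := A) hi, ← hA.toSubmodule_towerBlock_Icc_eq_mul h (by omega)]
  exact hu

theorem mem_bot_of_forall_commute_lt (hA : IsCrossedTower A)
    (hfin : ∀ i, FiniteDimensional K (A i))
    (hdisj : ∀ lo m hi, (towerBlock A (Icc lo (m - 1))).LinearDisjoint (towerBlock A (Icc m hi)))
    (hsucc : ∀ i, Subalgebra.centralizer K (A i : Set S) ⊓ A (i + 1) = ⊥)
    {lo hi : ℤ} {u : S} (hu : u ∈ towerBlock A (Icc lo hi))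
    (hc : ∀ i < hi, ∀ a ∈ A i, Commute a u) : u ∈ (⊥ : Subalgebra K S) := by
  rcases lt_or_ge hi lo with h | h
  · rwa [towerBlock_Icc_of_lt h] at hu
  induction lo, h using Int.leInductionDown with
  | base =>
    have := hA.mem_towerBlock_Icc_add_one_of_commute hfin hdisj hsucc hu (hc _ (by omega))
    rwa [towerBlock_Icc_of_lt (lt_add_one hi)] at this
  | pred lo hlo ih =>
    have := hA.mem_towerBlock_Icc_add_one_of_commute hfin hdisj hsucc hu (hc _ (by omega))
    exact ih (by simpa using this)

theorem mem_bot_of_forall_commute_gt (hA : IsCrossedTower A)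
    (hfin : ∀ i, FiniteDimensional K (A i))
    (hdisj : ∀ lo m hi, (towerBlock A (Icc lo (m - 1))).LinearDisjoint (towerBlock A (Icc m hi)))
    (hpred : ∀ i, Subalgebra.centralizer K (A (i + 1) : Set S) ⊓ A i = ⊥)
    {lo hi : ℤ} {u : S} (hu : u ∈ towerBlock A (Icc lo hi))
    (hc : ∀ i > lo, ∀ a ∈ A i, Commute a u) : u ∈ (⊥ : Subalgebra K S) := by
  rcases lt_or_ge hi lo with h | h
  · rwa [towerBlock_Icc_of_lt h] at hu
  induction hi, h using Int.leInduction with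
  | base =>
    have := hA.mem_towerBlock_Icc_sub_one_of_commute hfin hdisj hpred hu (hc _ (by omega))
    rwa [towerBlock_Icc_of_lt (sub_one_lt lo)] at this
  | succ hi hhi ih =>
    have := hA.mem_towerBlock_Icc_sub_one_of_commute hfin hdisj hpred hu (hc _ (by omega))
    exact ih (by simpa using this)

theorem mem_towerBlock_Icc_of_forall_commute_le (hA : IsCrossedTower A)
    (hfin : ∀ i, FiniteDimensional K (A i))
    (hdisj : ∀ lo m hi, (towerBlock A (Icc lo (m - 1))).LinearDisjoint (towerBlock A (Icc m hi)))
    (hsucc : ∀ i, Subalgebra.centralizer K (A i : Set S) ⊓ A (i + 1) = ⊥)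
    {lo p hi : ℤ} (hlo : lo ≤ p) (hhi : p + 2 ≤ hi) {b : S}
    (hb : b ∈ towerBlock A (Icc lo hi))
    (hc : ∀ a ∈ ⋃ i ∈ Iic p, (A i : Set S), Commute a b) :
    b ∈ towerBlock A (Icc (p + 2) hi) := by
  have := hA.finiteDimensional_towerBlock_Icc hfin (p + 2) hi
  refine Subalgebra.mem_right_of_mem_mul_of_forall_commute
    (U₀ := towerBlock A (Icc lo (p + 1))) (fun a ha => ?_)
    (fun x hx hxc => hA.mem_bot_of_forall_commute_lt hfin hdisj hsucc hx fun i hi a ha =>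
      hxc a (Set.mem_biUnion (show i ∈ Iic p by simp only [mem_Iic]; omega) ha)) ?_ hc
  · obtain ⟨i, hip, ha⟩ := Set.mem_iUnion₂.mp ha
    rw [mem_Iic] at hip
    refine ⟨towerBlock A (Icc (min i lo) (p + 1)),
      towerBlock_mono (Icc_subset_Icc (min_le_right i lo) le_rfl),
      le_towerBlock (by simp only [mem_Icc]; omega) ha,
      by simpa only [show p + 2 - 1 = p + 1 by ring] using hdisj (min i lo) (p + 2) hi,
      fun v hv => hA.commute_of_mem_towerBlock
        (fun j hj => Or.inl (by simp only [mem_Icc] at hj; omega)) ha hv⟩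
  · have := hA.toSubmodule_towerBlock_Icc_eq_mul (lo := lo) (m := p + 2) (hi := hi)
      (by omega) (by omega)
    rw [show p + 2 - 1 = p + 1 by ring] at this
    rw [← this]
    exact hb

theorem mem_towerBlock_Icc_of_forall_commute_ge (hA : IsCrossedTower A)
    (hfin : ∀ i, FiniteDimensional K (A i))
    (hdisj : ∀ lo m hi, (towerBlock A (Icc lo (m - 1))).LinearDisjoint (towerBlock A (Icc m hi)))
    (hpred : ∀ i, Subalgebra.centralizer K (A (i + 1) : Set S) ⊓ A i = ⊥)
    {lo p hi : ℤ} (hlo : lo ≤ p) (hhi : p + 2 ≤ hi) {b : S}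
    (hb : b ∈ towerBlock A (Icc lo hi))
    (hc : ∀ a ∈ ⋃ i ∈ Ici (p + 2), (A i : Set S), Commute a b) :
    b ∈ towerBlock A (Icc lo p) := by
  have := hA.finiteDimensional_towerBlock_Icc hfin lo p
  refine Subalgebra.mem_left_of_mem_mul_of_forall_commute
    (U₀ := towerBlock A (Icc (p + 1) hi)) (fun a ha => ?_)
    (fun x hx hxc => hA.mem_bot_of_forall_commute_gt hfin hdisj hpred hx fun i hi a ha =>
      hxc a (Set.mem_biUnion (show i ∈ Ici (p + 2) by simp only [mem_Ici]; omega) ha))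
    ?_ hc
  · obtain ⟨i, hip, ha⟩ := Set.mem_iUnion₂.mp ha
    rw [mem_Ici] at hip
    refine ⟨towerBlock A (Icc (p + 1) (max i hi)),
      towerBlock_mono (Icc_subset_Icc le_rfl (le_max_right i hi)),
      le_towerBlock (by simp only [mem_Icc]; omega) ha,
      by simpa using hdisj lo (p + 1) (max i hi), fun v hv => hA.commute_of_mem_towerBlock
        (fun j hj => Or.inr (by simp only [mem_Icc] at hj; omega)) ha hv⟩
  · have := hA.toSubmodule_towerBlock_Icc_eq_mul (lo := lo) (m := p + 1) (hi := hi)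
      (by omega) (by omega)
    rw [add_sub_cancel_right] at this
    rw [← this]
    exact hb

theorem centralizer_towerBlock_Iic (hA : IsCrossedTower A) (hgen : towerBlock A univ = ⊤)
    (hfin : ∀ i, FiniteDimensional K (A i))
    (hdisj : ∀ lo m hi, (towerBlock A (Icc lo (m - 1))).LinearDisjoint (towerBlock A (Icc m hi)))
    (hsucc : ∀ i, Subalgebra.centralizer K (A i : Set S) ⊓ A (i + 1) = ⊥)
    (p : ℤ) :
    Subalgebra.centralizer K (towerBlock A (Iic p) : Set S) = towerBlock A (Ici (p + 2)) := by
  refine le_antisymm (fun b hb => ?_) (hA.towerBlock_le_centralizer fun i hi j hj =>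
    Or.inl (by simp only [mem_Iic, mem_Ici] at hi hj; omega))
  obtain ⟨lo, hlo, hi, hhi, hb'⟩ := exists_mem_towerBlock_Icc hgen b p (p + 2)
  refine towerBlock_mono Icc_subset_Ici_self
    (hA.mem_towerBlock_Icc_of_forall_commute_le hfin hdisj hsucc hlo hhi hb' fun a ha => ?_)
  exact (Subalgebra.mem_centralizer_iff K).mp hb a (Algebra.subset_adjoin ha)

theorem centralizer_towerBlock_Ici (hA : IsCrossedTower A) (hgen : towerBlock A univ = ⊤)
    (hfin : ∀ i, FiniteDimensional K (A i))
    (hdisj : ∀ lo m hi, (towerBlock A (Icc lo (m - 1))).LinearDisjoint (towerBlock A (Icc m hi)))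
    (hpred : ∀ i, Subalgebra.centralizer K (A (i + 1) : Set S) ⊓ A i = ⊥)
    (p : ℤ) :
    Subalgebra.centralizer K (towerBlock A (Ici (p + 2)) : Set S) = towerBlock A (Iic p) := by
  refine le_antisymm (fun b hb => ?_) (hA.towerBlock_le_centralizer fun i hi j hj =>
    Or.inr (by simp only [mem_Iic, mem_Ici] at hi hj; omega))
  obtain ⟨lo, hlo, hi, hhi, hb'⟩ := exists_mem_towerBlock_Icc hgen b p (p + 2)
  refine towerBlock_mono Icc_subset_Iic_self
    (hA.mem_towerBlock_Icc_of_forall_commute_ge hfin hdisj hpred hlo hhi hb' fun a ha => ?_)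
  exact (Subalgebra.mem_centralizer_iff K).mp hb a (Algebra.subset_adjoin ha)

end IsCrossedTower

end Tower

open Coalgebra

section Hopf

theorem counit_aKH_tmul (f : Dual ℂ H) (x : H) :
    counit (R := ℂ) (aKH (f ⊗ₜ x)) = f x := by
  conv_rhs => rw [← sum_counit_smul (ℛ ℂ x)]
  simp [aKH, ← (ℛ ℂ x).eq, tmul_sum, mul_comm]

theorem eq_smul_counit_of_forall {f : Dual ℂ H}
    (h : ∀ x, f x = f 1 * counit (R := ℂ) x) : f = f 1 • counit (R := ℂ) := by
  ext x
  simp [h x]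

variable [FiniteDimensional ℂ H]

theorem dualDistrib_dComul_tmul (f : Dual ℂ H) (x y : H) :
    dualDistrib ℂ H H (dComul f) (x ⊗ₜ y) = f (x * y) := by
  change dualDistribEquiv ℂ H H ((dualDistribEquiv ℂ H H).symm _) (x ⊗ₜ y) = _
  rw [LinearEquiv.apply_symm_apply]
  simp

theorem exists_finset_dComul (f : Dual ℂ H) :
    ∃ S : Finset (Dual ℂ H × Dual ℂ H), dComul f = ∑ i ∈ S, i.1 ⊗ₜ i.2 ∧
      ∀ x y : H, ∑ i ∈ S, i.1 x * i.2 y = f (x * y) := by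
  obtain ⟨S, hS⟩ := TensorProduct.exists_finset (R := ℂ) (dComul f)
  refine ⟨S, hS, fun x y => ?_⟩
  simpa [hS, dualDistrib_apply] using dualDistrib_dComul_tmul f x y

theorem aHK_tmul_apply (a : H) (f : Dual ℂ H) (z : H) : aHK (a ⊗ₜ f) z = f (z * a) := by
  obtain ⟨S, hS, hf⟩ := exists_finset_dComul f
  simp [aHK, hS, sum_tmul, hf, mul_comm]

/- Both lemmas apply the contraction `g ⊗ y ↦ g 1 * ε y` (or its mirror image), which sends
`σHK (x ⊗ f)` and `σKH (f ⊗ x)` to `f x`. -/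
theorem apply_eq_mul_counit_of_σHK_tmul_eq {x : H} {f : Dual ℂ H}
    (h : σHK (x ⊗ₜ f) = f ⊗ₜ x) : f x = f 1 * counit (R := ℂ) x := by
  have := congrArg (LinearMap.mul' ℂ ℂ ∘ₗ map (Dual.eval ℂ H 1) counit) h
  have hx := congrArg (LinearMap.mul' ℂ ℂ) (sum_map_tmul_counit_eq f x (repr := ℛ ℂ x))
  simp only [map_sum, LinearMap.mul'_apply, mul_one] at hx
  rw [← hx]
  simpa [σHK, ← (ℛ ℂ x).eq, sum_tmul, aHK_tmul_apply] using this

theorem apply_eq_mul_counit_of_σKH_tmul_eq {x : H} {f : Dual ℂ H}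
    (h : σKH (f ⊗ₜ x) = x ⊗ₜ f) : f x = f 1 * counit (R := ℂ) x := by
  have := congrArg (LinearMap.mul' ℂ ℂ ∘ₗ map counit (Dual.eval ℂ H 1)) h
  obtain ⟨S, hS, hf⟩ := exists_finset_dComul f
  simpa [σKH, hS, sum_tmul, counit_aKH_tmul, hf, mul_comm] using this

theorem eq_counit_smul_one_of_forall {x : H}
    (h : ∀ f : Dual ℂ H, f x = f 1 * counit (R := ℂ) x) : x = counit (R := ℂ) x • 1 := by
  rw [← sub_eq_zero, ← forall_dual_apply_eq_zero_iff ℂ]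
  intro f
  simp [h f, mul_comm]

end Hopf

section Factors

variable [FiniteDimensional ℂ H] {eH : ℤ → H →ₗ[ℂ] B} {eK : ℤ → Dual ℂ H →ₗ[ℂ] B}

def factor (ht : IsAltTowerZ 0 eH eK) (i : ℤ) : Subalgebra ℂ B where
  carrier := copyR 0 eH eK i
  mul_mem' {a b} ha hb := by
    unfold copyR at ha hb ⊢
    split_ifs at ha hb ⊢ with h
    · obtain ⟨f, rfl⟩ := ha
      obtain ⟨g, rfl⟩ := hb
      exact ⟨dmulT (f ⊗ₜ g), ht.mulK i h f g⟩
    · obtain ⟨x, rfl⟩ := ha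
      obtain ⟨y, rfl⟩ := hb
      exact ⟨x * y, ht.mulH i (by omega) x y⟩
  add_mem' {a b} ha hb := by
    unfold copyR at ha hb ⊢
    split_ifs at ha hb ⊢
    · obtain ⟨f, rfl⟩ := ha
      obtain ⟨g, rfl⟩ := hb
      exact ⟨f + g, map_add _ f g⟩
    · obtain ⟨x, rfl⟩ := ha
      obtain ⟨y, rfl⟩ := hb
      exact ⟨x + y, map_add _ x y⟩
  algebraMap_mem' c := by
    unfold copyR
    split_ifs with h
    · exact ⟨c • counit, by rw [map_smul, ht.oneK i h, Algebra.algebraMap_eq_smul_one]⟩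
    · exact ⟨c • 1, by rw [map_smul, ht.oneH i (by omega), Algebra.algebraMap_eq_smul_one]⟩

variable (ht : IsAltTowerZ 0 eH eK)

@[simp]
theorem coe_factor (i : ℤ) : (factor ht i : Set B) = copyR 0 eH eK i := rfl

theorem toSubmodule_factor_of_even {i : ℤ} (h : i % 2 = 0) :
    toSubmodule (factor ht i) = LinearMap.range (eK i) :=
  SetLike.coe_injective (by simp [copyR, h, LinearMap.coe_range])

theorem toSubmodule_factor_of_odd {i : ℤ} (h : i % 2 = 1) :
    toSubmodule (factor ht i) = LinearMap.range (eH i) :=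
  SetLike.coe_injective (by simp [copyR, h, LinearMap.coe_range])

theorem isCrossedTower_factor : IsCrossedTower (factor ht) where
  commute := ht.commute
  succ_mul_le i := by
    rcases Int.emod_two_eq_zero_or_one i with h | h
    · rw [toSubmodule_factor_of_even ht h, toSubmodule_factor_of_odd ht (by omega),
        ← LinearMap.range_mul'_comp_map, ← LinearMap.range_mul'_comp_map,
        ht.strK i (by simpa using h), ← LinearMap.comp_assoc]
      exact LinearMap.range_comp_le_range _ _
    · rw [toSubmodule_factor_of_odd ht h, toSubmodule_factor_of_even ht (by omega),
        ← LinearMap.range_mul'_comp_map, ← LinearMap.range_mul'_comp_map,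
        ht.strH i (by simpa using h), ← LinearMap.comp_assoc]
      exact LinearMap.range_comp_le_range _ _

theorem towerBlock_factor_univ : towerBlock (factor ht) Set.univ = ⊤ := by
  simpa [towerBlock] using ht.gen

theorem finiteDimensional_factor (i : ℤ) : FiniteDimensional ℂ (factor ht i) := by
  change FiniteDimensional ℂ (toSubmodule (factor ht i))
  rcases Int.emod_two_eq_zero_or_one i with h | h
  · rw [toSubmodule_factor_of_even ht h]
    infer_instance
  · rw [toSubmodule_factor_of_odd ht h]
    infer_instance

theorem finrank_toSubmodule_factor_mul
    (hdim : ∀ lo hi : ℤ, lo ≤ hi →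
      finrank ℂ ↥(Algebra.adjoin ℂ (⋃ i ∈ Set.Icc lo hi, copyR 0 eH eK i))
        = finrank ℂ H ^ (hi + 1 - lo).toNat) (i : ℤ) :
    finrank ℂ ↥(toSubmodule (factor ht i) * toSubmodule (factor ht (i + 1))) =
      finrank ℂ H * finrank ℂ H := by
  have hmul := (isCrossedTower_factor ht).toSubmodule_towerBlock_Icc_eq_mul
    (lo := i) (m := i + 1) (hi := i + 1) (by omega) (by omega)
  rw [add_sub_cancel_right, towerBlock_Icc_self, towerBlock_Icc_self] at hmul
  have hfr : finrank ℂ (towerBlock (factor ht) (Set.Icc i (i + 1))) =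
      finrank ℂ H ^ (i + 1 + 1 - i).toNat := hdim i (i + 1) (by omega)
  rw [← hmul, Subalgebra.finrank_toSubmodule, hfr, show (i + 1 + 1 - i).toNat = 2 by omega, sq]

theorem apply_eq_mul_counit_of_commute_of_even {i : ℤ} (h : i % 2 = 0)
    (hfr : finrank ℂ ↥(toSubmodule (factor ht i) * toSubmodule (factor ht (i + 1))) =
      finrank ℂ H * finrank ℂ H) {f : Dual ℂ H} {y : H}
    (hc : Commute (eK i f) (eH (i + 1) y)) : f y = f 1 * counit (R := ℂ) y := by
  have hinj : Function.Injective (LinearMap.mul' ℂ B ∘ₗ map (eK i) (eH (i + 1))) :=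
    LinearMap.injective_mul'_comp_map (by
      rw [← toSubmodule_factor_of_even ht h, ← toSubmodule_factor_of_odd ht (by omega),
        hfr, Subspace.dual_finrank_eq])
  exact apply_eq_mul_counit_of_σHK_tmul_eq
    ((LinearMap.commute_iff_of_mul'_comp_map_eq (ht.strK i (by simpa using h)) hinj y f).mp hc)

theorem apply_eq_mul_counit_of_commute_of_odd {i : ℤ} (h : i % 2 = 1)
    (hfr : finrank ℂ ↥(toSubmodule (factor ht i) * toSubmodule (factor ht (i + 1))) =
      finrank ℂ H * finrank ℂ H) {f : Dual ℂ H} {y : H}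
    (hc : Commute (eH i y) (eK (i + 1) f)) : f y = f 1 * counit (R := ℂ) y := by
  have hinj : Function.Injective (LinearMap.mul' ℂ B ∘ₗ map (eH i) (eK (i + 1))) :=
    LinearMap.injective_mul'_comp_map (by
      rw [← toSubmodule_factor_of_odd ht h, ← toSubmodule_factor_of_even ht (by omega),
        hfr, Subspace.dual_finrank_eq])
  exact apply_eq_mul_counit_of_σKH_tmul_eq
    ((LinearMap.commute_iff_of_mul'_comp_map_eq (ht.strH i (by simpa using h)) hinj f y).mp hc)

theorem centralizer_factor_inf_factor_add_one
    (hdim : ∀ lo hi : ℤ, lo ≤ hi →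
      finrank ℂ ↥(Algebra.adjoin ℂ (⋃ i ∈ Set.Icc lo hi, copyR 0 eH eK i))
        = finrank ℂ H ^ (hi + 1 - lo).toNat) (i : ℤ) :
    Subalgebra.centralizer ℂ (factor ht i : Set B) ⊓ factor ht (i + 1) = ⊥ := by
  refine eq_bot_iff.mpr fun x ⟨hc, hx⟩ => ?_
  have hfr := finrank_toSubmodule_factor_mul ht hdim i
  rcases Int.emod_two_eq_zero_or_one i with h | h
  · obtain ⟨y, rfl⟩ : x ∈ Set.range (eH (i + 1)) := by
      simpa [copyR, Int.add_emod, h] using hx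
    have hy := eq_counit_smul_one_of_forall fun f => apply_eq_mul_counit_of_commute_of_even ht
      h hfr (hc _ (by simp [copyR, h]))
    rw [hy, map_smul, ht.oneH _ (by omega)]
    exact Subalgebra.smul_mem _ (one_mem _) _
  · obtain ⟨g, rfl⟩ : x ∈ Set.range (eK (i + 1)) := by
      simpa [copyR, Int.add_emod, h] using hx
    have hg := eq_smul_counit_of_forall fun y => apply_eq_mul_counit_of_commute_of_odd ht
      h hfr (hc _ (by simp [copyR, h]))
    rw [hg, map_smul, ht.oneK _ (by omega)]
    exact Subalgebra.smul_mem _ (one_mem _) _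

theorem centralizer_factor_add_one_inf_factor
    (hdim : ∀ lo hi : ℤ, lo ≤ hi →
      finrank ℂ ↥(Algebra.adjoin ℂ (⋃ i ∈ Set.Icc lo hi, copyR 0 eH eK i))
        = finrank ℂ H ^ (hi + 1 - lo).toNat) (i : ℤ) :
    Subalgebra.centralizer ℂ (factor ht (i + 1) : Set B) ⊓ factor ht i = ⊥ := by
  refine eq_bot_iff.mpr fun x ⟨hc, hx⟩ => ?_
  have hfr := finrank_toSubmodule_factor_mul ht hdim i
  rcases Int.emod_two_eq_zero_or_one i with h | h
  · obtain ⟨f, rfl⟩ : x ∈ Set.range (eK i) := by simpa [copyR, h] using hx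
    have hf := eq_smul_counit_of_forall fun y => apply_eq_mul_counit_of_commute_of_even ht
      h hfr (hc _ (by simp [copyR, Int.add_emod, h])).symm
    rw [hf, map_smul, ht.oneK _ (by omega)]
    exact Subalgebra.smul_mem _ (one_mem _) _
  · obtain ⟨y, rfl⟩ : x ∈ Set.range (eH i) := by simpa [copyR, h] using hx
    have hy := eq_counit_smul_one_of_forall fun f => apply_eq_mul_counit_of_commute_of_odd ht
      h hfr (hc _ (by simp [copyR, Int.add_emod, h])).symm
    rw [hy, map_smul, ht.oneH _ (by omega)]
    exact Subalgebra.smul_mem _ (one_mem _) _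

end Factors

end CrossedProductTower

theorem infinite_crossed_product_mutual_commutants
    [FiniteDimensional ℂ H]
    (eH : ℤ → H →ₗ[ℂ] B) (eK : ℤ → Module.Dual ℂ H →ₗ[ℂ] B)
    -- B is the infinite iterated crossed product (H at odd positions, H* at even positions):
    (ht : IsAltTowerZ 0 eH eK)
    -- each finite interval generates a subalgebra of the correct dimension:
    (hdim : ∀ lo hi : ℤ, lo ≤ hi →
      Module.finrank ℂ
          ↥(Algebra.adjoin ℂ (⋃ i ∈ Set.Icc lo hi, copyR 0 eH eK i))
        = Module.finrank ℂ H ^ (hi + 1 - lo).toNat)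
    (p : ℤ) :
    -- H_{(−∞,p]} and H_{[p+2,∞)} are mutual commutants in H_{(−∞,∞)}:
    Subalgebra.centralizer ℂ
        ((Algebra.adjoin ℂ (⋃ i ∈ Set.Iic p, copyR 0 eH eK i) : Subalgebra ℂ B) : Set B)
      = Algebra.adjoin ℂ (⋃ i ∈ Set.Ici (p + 2), copyR 0 eH eK i) ∧
    Subalgebra.centralizer ℂ
        ((Algebra.adjoin ℂ (⋃ i ∈ Set.Ici (p + 2), copyR 0 eH eK i) : Subalgebra ℂ B) : Set B)
      = Algebra.adjoin ℂ (⋃ i ∈ Set.Iic p, copyR 0 eH eK i) := by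
  have hA := CrossedProductTower.isCrossedTower_factor ht
  have hgen := CrossedProductTower.towerBlock_factor_univ ht
  have hfin := CrossedProductTower.finiteDimensional_factor ht
  have hdisj := hA.linearDisjoint_towerBlock_of_finrank hfin hdim
  exact ⟨hA.centralizer_towerBlock_Iic hgen hfin hdisj
      (CrossedProductTower.centralizer_factor_inf_factor_add_one ht hdim) p,
    hA.centralizer_towerBlock_Ici hgen hfin hdisj
      (CrossedProductTower.centralizer_factor_add_one_inf_factor ht hdim) p⟩

end
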